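/- arXiv:1006.2030 — 5 statements merged into one kernel-verified Lean document; each statement's English description precedes it below -/
import Mathlib

section
/- If F : ℝⁿ → ℝⁿ is a P₀-function, then the function F_min defined componentwise by F_min(x)_i = min(x_i, F_i(x)) is also a P₀-function. -/
/-- If `F` is a `P₀`-function, then `x ↦ min (x i) (F x i)` componentwise is also a
`P₀`-function. -/
theorem stmt_0 {n : ℕ} (F : (Fin n → ℝ) → (Fin n → ℝ))
    (hF : ∀ x y : Fin n → ℝ, x ≠ y →
      ∃ i, x i ≠ y i ∧ 0 ≤ (x i - y i) * (F x i - F y i)) :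
    ∀ x y : Fin n → ℝ, x ≠ y →
      ∃ i, x i ≠ y i ∧
        0 ≤ (x i - y i) * (min (x i) (F x i) - min (y i) (F y i)) := by
  intro x y hxy
  obtain ⟨i, hne, hprod⟩ := hF x y hxy
  refine ⟨i, hne, ?_⟩
  rcases lt_or_gt_of_ne hne with h | h
  · have hF' : F x i ≤ F y i := by nlinarith
    have hm : min (x i) (F x i) ≤ min (y i) (F y i) := min_le_min h.le hF'
    nlinarith
  · have hF' : F y i ≤ F x i := by nlinarith
    have hm : min (y i) (F y i) ≤ min (x i) (F x i) := min_le_min h.le hF'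
    nlinarith
end

section
/- If F : ℝⁿ → ℝⁿ is a P-function, then F_min(x)_i = min(x_i, F_i(x)) is also a P-function. -/
/-- If `F` is a `P`-function, then `x ↦ min (x i) (F x i)` componentwise is also a
`P`-function. -/
theorem stmt_1 {n : ℕ} (F : (Fin n → ℝ) → (Fin n → ℝ))
    (hF : ∀ x y : Fin n → ℝ, x ≠ y →
      ∃ i, x i ≠ y i ∧ 0 < (x i - y i) * (F x i - F y i)) :
    ∀ x y : Fin n → ℝ, x ≠ y →
      ∃ i, x i ≠ y i ∧
        0 < (x i - y i) * (min (x i) (F x i) - min (y i) (F y i)) := by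
  intro x y hxy
  rcases hF x y hxy with ⟨i, hne, hpos⟩
  refine ⟨i, hne, ?_⟩
  rcases hne.lt_or_gt with h | h
  · have hF' : F x i < F y i := by nlinarith
    have hm : min (x i) (F x i) < min (y i) (F y i) :=
      lt_min ((min_le_left _ _).trans_lt h) ((min_le_right _ _).trans_lt hF')
    nlinarith
  · have hF' : F y i < F x i := by nlinarith
    have hm : min (y i) (F y i) < min (x i) (F x i) :=
      lt_min ((min_le_left _ _).trans_lt h) ((min_le_right _ _).trans_lt hF')
    nlinarith
end

section
/- Let F : ℝⁿ → ℝⁿ be continuous and monotone (i.e., (x−y)ᵀ(F(x)−F(y)) ≥ 0 for all x, y). Suppose there exists y ∈ ℝⁿ with F(y) > 0 componentwise, and there exist constants c, M > 0 such that for all x with ‖x‖₁ ≥ M one has ‖F(x)‖ ≤ c‖x‖₁, where c < (min_i F_i(y))/‖y‖. Then for any ε > 0 the set Z_ε = {x : x ≥ 0, F(x) ≥ 0, xᵀF(x) ≤ ε} is compact. -/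
/-!
`Z_ε` is closed by continuity of `F`, so it suffices to bound it. Monotonicity tested against the
strictly feasible point `y` gives, for `x ∈ Z_ε`,
`(min_i F_i(y)) ‖x‖₁ ≤ xᵀF(y) ≤ xᵀF(x) + yᵀF(y) - yᵀF(x) ≤ ε + yᵀF(y) + ‖y‖ ‖F(x)‖`,
and once `‖x‖₁ ≥ M` the growth condition turns the last term into `c ‖y‖ ‖x‖₁`. Since
`c ‖y‖ < min_i F_i(y)`, this bounds `‖x‖₁`, hence `‖x‖ ≤ ‖x‖₁`.
-/

open Finset

variable {ι : Type*} [Fintype ι]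

namespace EuclideanSpace

lemma norm_le_sum_abs (x : EuclideanSpace ℝ ι) : ‖x‖ ≤ ∑ i, |x i| := by
  rw [EuclideanSpace.norm_eq, ← Real.sqrt_sq (sum_nonneg fun i _ => abs_nonneg (x i))]
  exact Real.sqrt_le_sqrt (sum_sq_le_sq_sum_of_nonneg fun i _ => abs_nonneg _)

lemma abs_sum_mul_le_norm_mul_norm (u v : EuclideanSpace ℝ ι) :
    |∑ i, u i * v i| ≤ ‖u‖ * ‖v‖ := by
  simpa [PiLp.inner_apply, mul_comm] using abs_real_inner_le_norm u v

end EuclideanSpace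

def approxSolutionSet (F : EuclideanSpace ℝ ι → EuclideanSpace ℝ ι) (ε : ℝ) :
    Set (EuclideanSpace ℝ ι) :=
  {x | (∀ i, 0 ≤ x i) ∧ (∀ i, 0 ≤ F x i) ∧ ∑ i, x i * F x i ≤ ε}

variable {F : EuclideanSpace ℝ ι → EuclideanSpace ℝ ι}

lemma isClosed_approxSolutionSet (hF : Continuous F) (ε : ℝ) :
    IsClosed (approxSolutionSet F ε) := by
  have hproj (i : ι) : Continuous fun x : EuclideanSpace ℝ ι => x i :=
    (EuclideanSpace.proj i).continuous
  simp only [approxSolutionSet, Set.ofPred_and, Set.ofPred_forall]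
  refine (isClosed_iInter fun i => isClosed_le continuous_const (hproj i)).inter <|
    (isClosed_iInter fun i => isClosed_le continuous_const ((hproj i).comp hF)).inter <|
    isClosed_le (continuous_finsetSum _ fun i _ => (hproj i).mul ((hproj i).comp hF))
      continuous_const

lemma sum_mul_add_sum_mul_le_of_monotone
    (hmono : ∀ x y : EuclideanSpace ℝ ι, 0 ≤ ∑ i, (x i - y i) * (F x i - F y i))
    (x y : EuclideanSpace ℝ ι) :
    ∑ i, x i * F y i + ∑ i, y i * F x i ≤ ∑ i, x i * F x i + ∑ i, y i * F y i := by
  have h := hmono x y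
  simp only [sub_mul, mul_sub, sum_sub_distrib] at h
  linarith

lemma mul_sum_le_of_mem_approxSolutionSet
    (hmono : ∀ x y : EuclideanSpace ℝ ι, 0 ≤ ∑ i, (x i - y i) * (F x i - F y i))
    {y : EuclideanSpace ℝ ι} {m c ε : ℝ} (hm : ∀ i, m ≤ F y i)
    {x : EuclideanSpace ℝ ι} (hx : x ∈ approxSolutionSet F ε) (hFx : ‖F x‖ ≤ c * ∑ i, x i) :
    (m - c * ‖y‖) * ∑ i, x i ≤ ε + ∑ i, y i * F y i := by
  obtain ⟨hx0, -, hxε⟩ := hx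
  have hlower : m * ∑ i, x i ≤ ∑ i, x i * F y i := by
    rw [mul_sum]
    exact sum_le_sum fun i _ => by rw [mul_comm]; exact mul_le_mul_of_nonneg_left (hm i) (hx0 i)
  have hcross : -(‖y‖ * (c * ∑ i, x i)) ≤ ∑ i, y i * F x i :=
    neg_le_of_abs_le <| (EuclideanSpace.abs_sum_mul_le_norm_mul_norm y (F x)).trans <|
      mul_le_mul_of_nonneg_left hFx (norm_nonneg y)
  linarith [sum_mul_add_sum_mul_le_of_monotone hmono x y]

lemma isBounded_approxSolutionSet
    (hmono : ∀ x y : EuclideanSpace ℝ ι, 0 ≤ ∑ i, (x i - y i) * (F x i - F y i))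
    {y : EuclideanSpace ℝ ι} {m c M : ℝ} (hm : ∀ i, m ≤ F y i) (hcm : c * ‖y‖ < m)
    (hgrow : ∀ x : EuclideanSpace ℝ ι, M ≤ ∑ i, |x i| → ‖F x‖ ≤ c * ∑ i, |x i|) (ε : ℝ) :
    Bornology.IsBounded (approxSolutionSet F ε) := by
  refine (Metric.isBounded_closedBall (x := 0)
    (r := max M ((ε + ∑ i, y i * F y i) / (m - c * ‖y‖)))).subset fun x hx => ?_
  have hl1 : ∑ i, |x i| = ∑ i, x i := sum_congr rfl fun i _ => abs_of_nonneg (hx.1 i)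
  rw [mem_closedBall_zero_iff]
  refine (EuclideanSpace.norm_le_sum_abs x).trans ?_
  rw [hl1]
  rcases le_or_gt (∑ i, x i) M with hsmall | hlarge
  · exact le_max_of_le_left hsmall
  · refine le_max_of_le_right <| (le_div_iff₀ (sub_pos.2 hcm)).2 ?_
    rw [mul_comm]
    exact mul_sum_le_of_mem_approxSolutionSet hmono hm hx (hl1 ▸ hgrow x (hl1 ▸ hlarge.le))

theorem stmt_3_general {n : ℕ} (F : EuclideanSpace ℝ (Fin n) → EuclideanSpace ℝ (Fin n))
    (hcont : Continuous F)
    (hmono : ∀ x y : EuclideanSpace ℝ (Fin n), 0 ≤ ∑ i, (x i - y i) * (F x i - F y i))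
    (y : EuclideanSpace ℝ (Fin n))
    (c M : ℝ) (hc : 0 < c)
    (hgrow : ∀ x : EuclideanSpace ℝ (Fin n), M ≤ ∑ i, |x i| → ‖F x‖ ≤ c * ∑ i, |x i|)
    (hcsmall : c < (⨅ i, F y i) / ‖y‖)
    (ε : ℝ) :
    IsCompact {x : EuclideanSpace ℝ (Fin n) |
      (∀ i, 0 ≤ x i) ∧ (∀ i, 0 ≤ F x i) ∧ ∑ i, x i * F x i ≤ ε} := by
  -- `‖y‖ = 0` would make `hcsmall` read `c < 0`, since `a / 0 = 0`.
  have hy : 0 < ‖y‖ := (norm_nonneg y).lt_of_ne' fun h => by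
    rw [h, div_zero] at hcsmall
    exact hc.not_gt hcsmall
  exact Metric.isCompact_of_isClosed_isBounded (isClosed_approxSolutionSet hcont ε)
    (isBounded_approxSolutionSet hmono (fun i => ciInf_le (Finite.bddBelow_range _) i)
      ((lt_div_iff₀ hy).1 hcsmall) hgrow ε)

/-- Compactness of the set `Z_ε` for continuous monotone `F` satisfying a strict feasibility
condition and a sublinear growth condition. -/
theorem stmt_3 {n : ℕ} (F : EuclideanSpace ℝ (Fin n) → EuclideanSpace ℝ (Fin n))
    (hcont : Continuous F)
    (hmono : ∀ x y : EuclideanSpace ℝ (Fin n), 0 ≤ ∑ i, (x i - y i) * (F x i - F y i))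
    (y : EuclideanSpace ℝ (Fin n)) (hy : ∀ i, 0 < F y i)
    (c M : ℝ) (hc : 0 < c) (hM : 0 < M)
    (hgrow : ∀ x : EuclideanSpace ℝ (Fin n), M ≤ ∑ i, |x i| → ‖F x‖ ≤ c * ∑ i, |x i|)
    (hcsmall : c < (⨅ i, F y i) / ‖y‖)
    (ε : ℝ) (hε : 0 < ε) :
    IsCompact {x : EuclideanSpace ℝ (Fin n) |
      (∀ i, 0 ≤ x i) ∧ (∀ i, 0 ≤ F x i) ∧ ∑ i, x i * F x i ≤ ε} :=
  stmt_3_general F hcont hmono y c M hc hgrow hcsmall ε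
end

section
/- Let θ : ℝ → (−∞,1) be increasing with θ(t) ≥ t/(t+1) for all t ≥ 0. If x ≥ 0 and F(x) ≥ 0 componentwise satisfy θ(x_i/r) + θ(F_i(x)/r) = 1 for all i, then x_i·F_i(x) ≤ r² for every i. -/
/-- Clearing denominators, `a/(a+1) + b/(b+1) ≤ 1` is `2ab + a + b ≤ ab + a + b + 1`. -/
theorem mul_le_one_of_div_add_one_add_div_add_one_le_one {K : Type*} [Field K] [LinearOrder K]
    [IsStrictOrderedRing K] {a b : K} (ha : 0 ≤ a) (hb : 0 ≤ b)
    (h : a / (a + 1) + b / (b + 1) ≤ 1) : a * b ≤ 1 := by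
  have ha1 : 0 < a + 1 := by linarith
  have hb1 : 0 < b + 1 := by linarith
  rw [div_add_div _ _ ha1.ne' hb1.ne', div_le_one (mul_pos ha1 hb1)] at h
  linarith

theorem stmt_18_general {n : ℕ} (θ : ℝ → ℝ)
    (hθ : ∀ t ≥ (0:ℝ), t / (t + 1) ≤ θ t)
    (r : ℝ) (hr : 0 < r) (x Fx : Fin n → ℝ)
    (hx : ∀ i, 0 ≤ x i) (hFx : ∀ i, 0 ≤ Fx i)
    (heq : ∀ i, θ (x i / r) + θ (Fx i / r) = 1) :
    ∀ i, x i * Fx i ≤ r ^ 2 := by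
  intro i
  have ha : 0 ≤ x i / r := div_nonneg (hx i) hr.le
  have hb : 0 ≤ Fx i / r := div_nonneg (hFx i) hr.le
  have hsum : x i / r / (x i / r + 1) + Fx i / r / (Fx i / r + 1) ≤ 1 := by
    linarith [hθ _ ha, hθ _ hb, heq i]
  have hprod := mul_le_one_of_div_add_one_add_div_add_one_le_one ha hb hsum
  rwa [div_mul_div_comm, ← sq, div_le_one (pow_pos hr 2)] at hprod

/-- If `θ` is increasing with `θ(t) ≥ t/(t+1)` for `t ≥ 0`, and nonnegative `x`, `Fx` satisfy
`θ(x_i/r) + θ(Fx_i/r) = 1` for all `i`, then `x_i·Fx_i ≤ r²` for all `i`. -/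
theorem stmt_18 {n : ℕ} (θ : ℝ → ℝ) (hθmono : StrictMono θ)
    (hθ : ∀ t ≥ (0:ℝ), t / (t + 1) ≤ θ t)
    (r : ℝ) (hr : 0 < r) (x Fx : Fin n → ℝ)
    (hx : ∀ i, 0 ≤ x i) (hFx : ∀ i, 0 ≤ Fx i)
    (heq : ∀ i, θ (x i / r) + θ (Fx i / r) = 1) :
    ∀ i, x i * Fx i ≤ r ^ 2 :=
  stmt_18_general θ hθ r hr x Fx hx hFx heq
end

section
/- Let F : ℝⁿ → ℝⁿ satisfy h(‖x−y‖) ≤ ⟨x−y, F(x)−F(y)⟩ for all x, y ≥ 0, where h : ℝ⁺ → ℝ with h(0)=0 and h restricted to [0,ε) is an increasing bijection onto [0,η). Suppose x* ≥ 0 solves the NCP (x* ≥ 0, F(x*) ≥ 0, ⟨x*, F(x*)⟩ = 0) and x⁽ʳ⁾ ≥ 0 satisfies F(x⁽ʳ⁾) ≥ 0 and x⁽ʳ⁾_i·F_i(x⁽ʳ⁾) ≤ r² for all i. Then for r with nr² < η, ‖x* − x⁽ʳ⁾‖ ≤ h⁻¹(n r²). -/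
/-!
Expanding `⟨x* - x⁽ʳ⁾, F x* - F x⁽ʳ⁾⟩` and dropping the nonnegative cross terms bounds it by
`∑ xᵢ⁽ʳ⁾ Fᵢ(x⁽ʳ⁾) ≤ n r² = h u` for some `u ∈ [0, ε)`; it remains to see that this forces
`‖x* - x⁽ʳ⁾‖ ≤ u`. The hypothesis on `h` only says something for distances below `ε`, where it
makes `F` monotone; a subdivision argument turns this local monotonicity into monotonicity of
`s ↦ ⟨x - y, F (y + s (x - y))⟩` on `[0, 1]`. If `‖x - y‖ > u`, apply the hypothesis at the point
`z` of the segment with `u < ‖z - y‖ < ε`: by that monotonicity,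
`h ‖z - y‖ ≤ ⟨z - y, F z - F y⟩ ≤ ⟨x - y, F x - F y⟩ ≤ h u`, contradicting strict monotonicity of `h`.
-/

open Set Finset
open scoped RealInnerProductSpace

theorem monotoneOn_Icc_of_local {g : ℝ → ℝ} {a b δ : ℝ} (hδ : 0 < δ)
    (hloc : ∀ s ∈ Icc a b, ∀ s' ∈ Icc a b, s < s' → s' - s < δ → g s ≤ g s') :
    MonotoneOn g (Icc a b) := by
  intro x hx y hy hxy
  rcases hxy.eq_or_lt with rfl | hxy
  · exact le_rfl
  obtain ⟨N, hN⟩ := exists_nat_gt ((y - x) / δ)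
  have hN0 : (0 : ℝ) < N := (div_pos (sub_pos.2 hxy) hδ).trans hN
  have hstep : 0 < (y - x) / N := div_pos (sub_pos.2 hxy) hN0
  have hstep_lt : (y - x) / N < δ := by
    rw [div_lt_iff₀ hN0]; rw [div_lt_iff₀ hδ] at hN; linarith
  set p : ℕ → ℝ := fun k => x + k * ((y - x) / N) with hp
  have hpN : p N = y := by simp only [hp]; field_simp; ring
  have hp_mem : ∀ k ≤ N, p k ∈ Icc a b := by
    intro k hk
    have hpk : p k ≤ p N := by simp only [hp]; gcongr
    exact ⟨hx.1.trans (le_add_of_nonneg_right (by positivity)), (hpN ▸ hpk).trans hy.2⟩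
  have hp_succ : ∀ k, p (k + 1) = p k + (y - x) / N := by
    intro k; simp only [hp]; push_cast; ring
  have hmono_steps : 0 ≤ ∑ k ∈ range N, (g (p (k + 1)) - g (p k)) := by
    refine sum_nonneg fun k hk => sub_nonneg.2 ?_
    have hk := mem_range.1 hk
    exact hloc _ (hp_mem k hk.le) _ (hp_mem (k + 1) hk) (by rw [hp_succ]; linarith)
      (by rw [hp_succ]; linarith)
  rw [sum_range_sub (fun k => g (p k)), hpN] at hmono_steps
  simpa [hp] using hmono_steps

section InnerProductSpace

variable {E : Type*} [NormedAddCommGroup E] [InnerProductSpace ℝ E] {K : Set E} {F : E → E}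

theorem monotoneOn_inner_comp_segment (hK : Convex ℝ K) {x y : E} (hx : x ∈ K) (hy : y ∈ K)
    {ε : ℝ} (hε : 0 < ε)
    (hloc : ∀ a ∈ K, ∀ b ∈ K, ‖a - b‖ < ε → 0 ≤ ⟪a - b, F a - F b⟫) :
    MonotoneOn (fun s : ℝ => ⟪y - x, F (x + s • (y - x))⟫) (Icc 0 1) := by
  refine monotoneOn_Icc_of_local (δ := ε / (‖y - x‖ + 1)) (by positivity) ?_
  intro s hs s' hs' hss' hsmall
  have hdiff : x + s' • (y - x) - (x + s • (y - x)) = (s' - s) • (y - x) := by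
    rw [sub_smul]; abel
  have hnear : ‖(s' - s) • (y - x)‖ < ε := by
    rw [norm_smul, Real.norm_of_nonneg (sub_nonneg.2 hss'.le)]
    rw [lt_div_iff₀ (by positivity)] at hsmall
    nlinarith [norm_nonneg (y - x)]
  have hpair := hloc _ (hK.add_smul_sub_mem hx hy hs') _ (hK.add_smul_sub_mem hx hy hs)
    (hdiff ▸ hnear)
  rw [hdiff, real_inner_smul_left, inner_sub_right] at hpair
  exact sub_nonneg.1 (nonneg_of_mul_nonneg_right hpair (sub_pos.2 hss'))

theorem norm_sub_le_of_inner_sub_le {h : ℝ → ℝ} {ε u : ℝ} (hK : Convex ℝ K) (hh0 : h 0 = 0)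
    (hmono : StrictMonoOn h (Ico 0 ε))
    (hF : ∀ x ∈ K, ∀ y ∈ K, h ‖x - y‖ ≤ ⟪x - y, F x - F y⟫)
    {x y : E} (hx : x ∈ K) (hy : y ∈ K) (hu : u ∈ Ico 0 ε)
    (hle : ⟪x - y, F x - F y⟫ ≤ h u) :
    ‖x - y‖ ≤ u := by
  by_contra! hlt
  have hd : 0 < ‖x - y‖ := hu.1.trans_lt hlt
  have hε : 0 < ε := hu.1.trans_lt hu.2
  have hloc : ∀ a ∈ K, ∀ b ∈ K, ‖a - b‖ < ε → 0 ≤ ⟪a - b, F a - F b⟫ := by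
    intro a ha b hb hab
    have hh_nonneg : h 0 ≤ h ‖a - b‖ :=
      hmono.monotoneOn ⟨le_rfl, hε⟩ ⟨norm_nonneg _, hab⟩ (norm_nonneg _)
    exact (hh0 ▸ hh_nonneg).trans (hF a ha b hb)
  set g : ℝ → ℝ := fun s => ⟪x - y, F (y + s • (x - y))⟫ with hg_def
  have hg := monotoneOn_inner_comp_segment hK hy hx hε hloc
  have hg0 : g 0 = ⟪x - y, F y⟫ := by simp [hg_def]
  have hg1 : g 1 = ⟪x - y, F x⟫ := by simp [hg_def]
  set d₁ := min ‖x - y‖ ((u + ε) / 2)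
  have hud₁ : u < d₁ := lt_min hlt (by linarith [hu.2])
  have hd₁ε : d₁ < ε := (min_le_right _ _).trans_lt (by linarith [hu.2])
  set t := d₁ / ‖x - y‖
  have ht0 : 0 < t := div_pos (hu.1.trans_lt hud₁) hd
  have ht1 : t ≤ 1 := div_le_one_of_le₀ (min_le_left _ _) hd.le
  have htd : t * ‖x - y‖ = d₁ := div_mul_cancel₀ _ hd.ne'
  have hz := hF _ (hK.add_smul_sub_mem hy hx ⟨ht0.le, ht1⟩) y hy
  rw [add_sub_cancel_left, norm_smul, Real.norm_of_nonneg ht0.le, htd, real_inner_smul_left,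
    inner_sub_right, ← hg0] at hz
  have hg01 : g 0 ≤ g 1 := hg ⟨le_rfl, zero_le_one⟩ ⟨zero_le_one, le_rfl⟩ zero_le_one
  have hgt1 : g t ≤ g 1 := hg ⟨ht0.le, ht1⟩ ⟨zero_le_one, le_rfl⟩ ht1
  refine lt_irrefl (h u) ?_
  calc
    h u < h d₁ := hmono hu ⟨(hu.1.trans_lt hud₁).le, hd₁ε⟩ hud₁
    _ ≤ t * (g t - g 0) := hz
    _ ≤ t * (g 1 - g 0) := by gcongr
    _ ≤ g 1 - g 0 := mul_le_of_le_one_left (sub_nonneg.2 hg01) ht1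
    _ = ⟪x - y, F x - F y⟫ := by rw [hg0, hg1, inner_sub_right]
    _ ≤ h u := hle

end InnerProductSpace

theorem sum_sub_mul_sub_le_of_nonneg {ι : Type*} (s : Finset ι) {a b c d : ι → ℝ}
    (ha : ∀ i, 0 ≤ a i) (hb : ∀ i, 0 ≤ b i) (hc : ∀ i, 0 ≤ c i) (hd : ∀ i, 0 ≤ d i) :
    ∑ i ∈ s, (a i - b i) * (c i - d i) ≤ ∑ i ∈ s, a i * c i + ∑ i ∈ s, b i * d i := by
  rw [← sum_add_distrib]
  gcongr with i
  nlinarith [mul_nonneg (ha i) (hd i), mul_nonneg (hb i) (hc i)]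

theorem convex_nonneg_orthant (n : ℕ) :
    Convex ℝ {x : EuclideanSpace ℝ (Fin n) | ∀ i, 0 ≤ x i} := by
  intro x hx y hy a b ha hb _ i
  simp only [PiLp.add_apply, PiLp.smul_apply, smul_eq_mul]
  exact add_nonneg (mul_nonneg ha (hx i)) (mul_nonneg hb (hy i))

theorem stmt_19_general {n : ℕ} (F : EuclideanSpace ℝ (Fin n) → EuclideanSpace ℝ (Fin n))
    (h hinv : ℝ → ℝ) (ε η : ℝ)
    (hh0 : h 0 = 0)
    (hcond : ∀ x y : EuclideanSpace ℝ (Fin n), (∀ i, 0 ≤ x i) → (∀ i, 0 ≤ y i) →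
      h ‖x - y‖ ≤ ∑ i, (x i - y i) * (F x i - F y i))
    (hmono : StrictMonoOn h (Set.Ico 0 ε))
    (hsurj : Set.SurjOn h (Set.Ico 0 ε) (Set.Ico 0 η))
    (hleftinv : ∀ u ∈ Set.Ico (0:ℝ) ε, hinv (h u) = u)
    (xs xr : EuclideanSpace ℝ (Fin n))
    (hxs : ∀ i, 0 ≤ xs i) (hFxs : ∀ i, 0 ≤ F xs i)
    (hcomp : ∑ i, xs i * F xs i = 0)
    (hxr : ∀ i, 0 ≤ xr i) (hFxr : ∀ i, 0 ≤ F xr i)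
    (r : ℝ) (hri : ∀ i, xr i * F xr i ≤ r ^ 2)
    (hrsmall : (n : ℝ) * r ^ 2 < η) :
    ‖xs - xr‖ ≤ hinv ((n : ℝ) * r ^ 2) := by
  have hinner : ∀ x y : EuclideanSpace ℝ (Fin n),
      ⟪x - y, F x - F y⟫ = ∑ i, (x i - y i) * (F x i - F y i) := by
    simp [PiLp.inner_apply, mul_comm]
  obtain ⟨u, hu, hhu⟩ := hsurj ⟨by positivity, hrsmall⟩
  rw [← hhu, hleftinv u hu]
  refine norm_sub_le_of_inner_sub_le (convex_nonneg_orthant n) hh0 hmono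
    (fun x hx y hy => hinner x y ▸ hcond x y hx hy) hxs hxr hu ?_
  calc ⟪xs - xr, F xs - F xr⟫
      ≤ ∑ i, xs i * F xs i + ∑ i, xr i * F xr i := by
        rw [hinner]; exact sum_sub_mul_sub_le_of_nonneg _ hxs hxr hFxs hFxr
    _ ≤ ∑ _i : Fin n, r ^ 2 := by rw [hcomp, zero_add]; exact sum_le_sum fun i _ => hri i
    _ = h u := by simp [hhu]

/-- Error estimate: if `h(‖x-y‖) ≤ ⟨x-y, F x - F y⟩` for `x, y ≥ 0`, `x*` solves the NCP and
`x⁽ʳ⁾ ≥ 0` satisfies `F(x⁽ʳ⁾) ≥ 0` and `x⁽ʳ⁾_i F_i(x⁽ʳ⁾) ≤ r²`, then for `n r² < η`,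
`‖x* - x⁽ʳ⁾‖ ≤ h⁻¹(n r²)`. -/
theorem stmt_19 {n : ℕ} (F : EuclideanSpace ℝ (Fin n) → EuclideanSpace ℝ (Fin n))
    (h hinv : ℝ → ℝ) (ε η : ℝ) (hε : 0 < ε) (hη : 0 < η)
    (hh0 : h 0 = 0)
    (hcond : ∀ x y : EuclideanSpace ℝ (Fin n), (∀ i, 0 ≤ x i) → (∀ i, 0 ≤ y i) →
      h ‖x - y‖ ≤ ∑ i, (x i - y i) * (F x i - F y i))
    (hmono : StrictMonoOn h (Set.Ico 0 ε))
    (hmaps : Set.MapsTo h (Set.Ico 0 ε) (Set.Ico 0 η))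
    (hsurj : Set.SurjOn h (Set.Ico 0 ε) (Set.Ico 0 η))
    (hleftinv : ∀ u ∈ Set.Ico (0:ℝ) ε, hinv (h u) = u)
    (hinvmono : MonotoneOn hinv (Set.Ico 0 η))
    (xs xr : EuclideanSpace ℝ (Fin n))
    (hxs : ∀ i, 0 ≤ xs i) (hFxs : ∀ i, 0 ≤ F xs i)
    (hcomp : ∑ i, xs i * F xs i = 0)
    (hxr : ∀ i, 0 ≤ xr i) (hFxr : ∀ i, 0 ≤ F xr i)
    (r : ℝ) (hr : 0 < r) (hri : ∀ i, xr i * F xr i ≤ r ^ 2)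
    (hrsmall : (n : ℝ) * r ^ 2 < η) :
    ‖xs - xr‖ ≤ hinv ((n : ℝ) * r ^ 2) :=
  stmt_19_general F h hinv ε η hh0 hcond hmono hsurj hleftinv xs xr hxs hFxs hcomp hxr hFxr r hri
    hrsmall
end
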